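/- For Q = {1,1,2} with three-letter words: assuming q_{11} q_{12} q_{21} = −1 (a solution of the cocycle condition (q_{11} q_{12} q_{21})² = 1 with q_{11} q_{12} q_{21} ≠ 1), and assuming there are no constants in degree two (i.e., q_{12} q_{21} ≠ 1 and q_{11} ≠ −1), there is no nonzero constant in the span of the monomials e_1e_1e_2, e_1e_2e_1, e_2e_1e_1. -/

import Mathlib

/-!
Write `x = c₁ e₁e₁e₂ + c₂ e₁e₂e₁ + c₃ e₂e₁e₁` and `r = q₁₂q₂₁`. Expanding the q-derivatives,
`∂₁x = 0` and `∂₂x = 0` become three linear equations in `c₁, c₂, c₃` whose determinant is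
`(1 + q₁₁)(1 - r)(1 - q₁₁r)`. The hypotheses make every factor nonzero (`q₁₁r = -1 ≠ 1` for the
last one), so only the trivial solution remains.
-/

open scoped BigOperators

noncomputable section

/-- The free unital ℂ-algebra on `N` generators, realized as the monoid algebra
of the free monoid on `Fin N`. -/
abbrev FA (N : ℕ) : Type := MonoidAlgebra ℂ (FreeMonoid (Fin N))

/-- The generator `e i`. -/
def gen {N : ℕ} (i : Fin N) : FA N :=
  MonoidAlgebra.of ℂ (FreeMonoid (Fin N)) (FreeMonoid.of i)

/-- The monomial `e_{i₁} ⋯ e_{iₙ}` attached to a word. -/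
def mono {N : ℕ} (w : List (Fin N)) : FA N :=
  MonoidAlgebra.of ℂ (FreeMonoid (Fin N)) (FreeMonoid.ofList w)

/-- The q-differential on monomials: `∂ᵢ(e_j x) = δᵢⱼ x + qᵢⱼ e_j ∂ᵢ x`, `∂ᵢ 1 = 0`. -/
def Dword {N : ℕ} (q : Fin N → Fin N → ℂ) (i : Fin N) : List (Fin N) → FA N
  | [] => 0
  | j :: w => (if i = j then mono w else 0) + q i j • (gen j * Dword q i w)

/-- The q-differential operator `∂ᵢ`, extended linearly from monomials. -/
def D {N : ℕ} (q : Fin N → Fin N → ℂ) (i : Fin N) (x : FA N) : FA N :=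
  Finsupp.sum x.coeff fun w c => c • Dword q i (FreeMonoid.toList w)

section Monomials

variable {N : ℕ}

lemma smul_mono (c : ℂ) (w : List (Fin N)) :
    c • mono w = MonoidAlgebra.single (FreeMonoid.ofList w) c := by
  simp [mono]

lemma gen_mul_mono (j : Fin N) (w : List (Fin N)) : gen j * mono w = mono (j :: w) := by
  rw [gen, mono, mono, ← map_mul]
  rfl

lemma smul_mono_eq_zero_iff {w : List (Fin N)} {c : ℂ} : c • mono w = (0 : FA N) ↔ c = 0 := by
  rw [smul_mono, MonoidAlgebra.single_eq_zero]

lemma smul_mono_add_smul_mono_eq_zero_iff {v w : List (Fin N)} (hvw : v ≠ w) {a b : ℂ} :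
    a • mono v + b • mono w = (0 : FA N) ↔ a = 0 ∧ b = 0 := by
  have hne : FreeMonoid.ofList v ≠ FreeMonoid.ofList w := FreeMonoid.ofList.injective.ne hvw
  refine ⟨fun h => ?_, fun ⟨ha, hb⟩ => by simp [ha, hb]⟩
  rw [smul_mono, smul_mono] at h
  have hv := congrArg (fun x : FA N => x.coeff (FreeMonoid.ofList v)) h
  have hw := congrArg (fun x : FA N => x.coeff (FreeMonoid.ofList w)) h
  simp [hne, hne.symm] at hv hw
  exact ⟨hv, hw⟩

end Monomials

section QDerivative

variable {N : ℕ} (q : Fin N → Fin N → ℂ) (i : Fin N)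

lemma D_add (x y : FA N) : D q i (x + y) = D q i x + D q i y := by
  rw [D, D, D, MonoidAlgebra.coeff_add]
  exact Finsupp.sum_add_index' (fun _ => zero_smul ℂ _) (fun _ a b => add_smul a b _)

lemma D_smul_mono (c : ℂ) (w : List (Fin N)) : D q i (c • mono w) = c • Dword q i w := by
  rw [D, smul_mono, MonoidAlgebra.coeff_single,
    Finsupp.sum_single_index (zero_smul ℂ (Dword q i _)), FreeMonoid.toList_ofList]

@[simp]
lemma Dword_nil : Dword q i [] = 0 := rfl

@[simp]
lemma Dword_cons_self (w : List (Fin N)) :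
    Dword q i (i :: w) = mono w + q i i • (gen i * Dword q i w) := by
  simp [Dword]

@[simp]
lemma Dword_cons_of_ne {j : Fin N} (hij : i ≠ j) (w : List (Fin N)) :
    Dword q i (j :: w) = q i j • (gen j * Dword q i w) := by
  simp [Dword, hij]

end QDerivative

section B112

variable {q : Fin 2 → Fin 2 → ℂ} (c₁ c₂ c₃ : ℂ)

lemma D_zero_B112 :
    D q 0 (c₁ • mono [0, 0, 1] + c₂ • mono [0, 1, 0] + c₃ • mono [1, 0, 0]) =
      (c₁ * (1 + q 0 0) + c₂ * (q 0 0 * q 0 1)) • mono [0, 1] +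
        (c₂ + c₃ * (q 0 1 * (1 + q 0 0))) • mono [1, 0] := by
  simp [D_add, D_smul_mono, gen_mul_mono, mul_add]
  module

lemma D_one_B112 :
    D q 1 (c₁ • mono [0, 0, 1] + c₂ • mono [0, 1, 0] + c₃ • mono [1, 0, 0]) =
      (c₁ * q 1 0 ^ 2 + c₂ * q 1 0 + c₃) • mono [0, 0] := by
  simp [D_add, D_smul_mono, gen_mul_mono]
  module

end B112

lemma eq_zero_of_B112_equations {c₁ c₂ c₃ q₁₁ q₁₂ q₂₁ : ℂ} (h₁₁ : q₁₁ ≠ -1) (hr : q₁₂ * q₂₁ ≠ 1)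
    (hqr : q₁₁ * (q₁₂ * q₂₁) ≠ 1) (E₁ : c₁ * (1 + q₁₁) + c₂ * (q₁₁ * q₁₂) = 0)
    (E₂ : c₂ + c₃ * (q₁₂ * (1 + q₁₁)) = 0) (E₃ : c₁ * q₂₁ ^ 2 + c₂ * q₂₁ + c₃ = 0) :
    c₁ = 0 ∧ c₂ = 0 ∧ c₃ = 0 := by
  have h₁₁' : 1 + q₁₁ ≠ 0 := fun h => h₁₁ (by linear_combination h)
  have hdet : (1 + q₁₁) * (1 - q₁₂ * q₂₁) * (1 - q₁₁ * (q₁₂ * q₂₁)) ≠ 0 :=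
    mul_ne_zero (mul_ne_zero h₁₁' (sub_ne_zero.mpr hr.symm)) (sub_ne_zero.mpr hqr.symm)
  have hc₃ : c₃ = 0 := by
    refine (mul_eq_zero.mp (?_ : c₃ * _ = 0)).resolve_right hdet
    linear_combination (1 + q₁₁) * E₃ - q₂₁ ^ 2 * E₁ + (q₁₁ * q₁₂ * q₂₁ ^ 2 - q₂₁ * (1 + q₁₁)) * E₂
  have hc₂ : c₂ = 0 := by linear_combination E₂ - q₁₂ * (1 + q₁₁) * hc₃
  have hc₁ : c₁ = 0 := by
    refine (mul_eq_zero.mp (?_ : c₁ * (1 + q₁₁) = 0)).resolve_right h₁₁'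
    linear_combination E₁ - q₁₁ * q₁₂ * hc₂
  exact ⟨hc₁, hc₂, hc₃⟩

/-- Indices: `e₁ = gen 0`, `e₂ = gen 1`. -/
theorem no_constant_112_general {q : Fin 2 → Fin 2 → ℂ}
    (hcoc : q 0 0 * (q 0 1 * q 1 0) = -1)
    (h12 : q 0 1 * q 1 0 ≠ 1) (h11 : q 0 0 ≠ -1) :
    ∀ c₁ c₂ c₃ : ℂ,
      D q 0 (c₁ • mono [0, 0, 1] + c₂ • mono [0, 1, 0] + c₃ • mono [1, 0, 0]) = 0 →
      D q 1 (c₁ • mono [0, 0, 1] + c₂ • mono [0, 1, 0] + c₃ • mono [1, 0, 0]) = 0 →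
      c₁ • mono [0, 0, 1] + c₂ • mono [0, 1, 0] + c₃ • (mono [1, 0, 0] : FA 2) = 0 := by
  intro c₁ c₂ c₃ h₀ h₁
  rw [D_zero_B112, smul_mono_add_smul_mono_eq_zero_iff (by decide)] at h₀
  rw [D_one_B112, smul_mono_eq_zero_iff] at h₁
  have hcoc' : q 0 0 * (q 0 1 * q 1 0) ≠ 1 := by rw [hcoc]; norm_num
  obtain ⟨rfl, rfl, rfl⟩ := eq_zero_of_B112_equations h11 h12 hcoc' h₀.1 h₀.2 h₁
  simp

/-- for `Q = {1,1,2}`, if `q₁₁ q₁₂ q₂₁ = −1` (so the cocycle condition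
`(q₁₁q₁₂q₂₁)² = 1` holds but `q₁₁q₁₂q₂₁ ≠ 1`), and there are no constants in degree two
(`q₁₂ q₂₁ ≠ 1` and `q₁₁ ≠ −1`), then there is no nonzero constant in the span of
`e₁e₁e₂, e₁e₂e₁, e₂e₁e₁`.  (Indices: `e₁ = gen 0`, `e₂ = gen 1`.) -/
theorem no_constant_112 {q : Fin 2 → Fin 2 → ℂ} (hq : ∀ i j, q i j ≠ 0)
    (hcoc : q 0 0 * (q 0 1 * q 1 0) = -1)
    (h12 : q 0 1 * q 1 0 ≠ 1) (h11 : q 0 0 ≠ -1) :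
    ∀ c₁ c₂ c₃ : ℂ,
      D q 0 (c₁ • mono [0, 0, 1] + c₂ • mono [0, 1, 0] + c₃ • mono [1, 0, 0]) = 0 →
      D q 1 (c₁ • mono [0, 0, 1] + c₂ • mono [0, 1, 0] + c₃ • mono [1, 0, 0]) = 0 →
      c₁ • mono [0, 0, 1] + c₂ • mono [0, 1, 0] + c₃ • (mono [1, 0, 0] : FA 2) = 0 :=
  no_constant_112_general hcoc h12 h11
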